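/- Let m ∈ {1, …, l} and let i, j, k ∈ {1, …, l+1} be indices such that at most one of i, j, k equals m. Then the sum of the residues of Υ_{ijk} at μ = κ_m and at μ = κ_m^{−1} is 0. Precisely: there exists ε > 0 such that for every r with 0 < r < ε, (2πi)^{−1}·(∮_{|μ−κ_m|=r} Υ_{ijk}(μ) dμ + ∮_{|μ−κ_m^{−1}|=r} Υ_{ijk}(μ) dμ) = 0. In particular, if i, j, k ∈ {1, …, l} are pairwise distinct, all such residue pair-sums vanish. -/

import Mathlib

open Complex Filter Topology

/-- The factor `-κ_m/(μ-κ_m) + κ_m⁻¹/(μ-κ_m⁻¹)` for an index `m ≤ l`, and `1`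
for the index `m = l+1`. -/
noncomputable def upsFactor (l : ℕ) (κ : ℕ → ℂ) (m : ℕ) (μ : ℂ) : ℂ :=
  if m ≤ l then -κ m / (μ - κ m) + (κ m)⁻¹ / (μ - (κ m)⁻¹) else 1

/-- The denominator
`D(μ) = ∑_{r=1}^l (1/(μ-κ_r) + 1/(μ-κ_r⁻¹)) - (l-2)/μ - 4μ/(μ²-1)`. -/
noncomputable def upsD (l : ℕ) (κ : ℕ → ℂ) (μ : ℂ) : ℂ :=
  (∑ r ∈ Finset.Icc 1 l, (1 / (μ - κ r) + 1 / (μ - (κ r)⁻¹)))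
    - ((l : ℂ) - 2) / μ - 4 * μ / (μ ^ 2 - 1)

/-- The integrand `Υ_{ijk}(μ) = -N_{ijk}(μ) / (2 μ² D(μ))` computing the residue
contributions to the dual Landau–Ginzburg product of the `D_l` relativistic
Toda spectral curve. -/
noncomputable def Ups (l : ℕ) (κ : ℕ → ℂ) (i j k : ℕ) (μ : ℂ) : ℂ :=
  -(upsFactor l κ i μ * upsFactor l κ j μ * upsFactor l κ k μ)
    / (2 * μ ^ 2 * upsD l κ μ)

/-!
Near `a = κ_m^{±1}` the denominator `D` has a simple pole with residue `1` (its other terms are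
regular there by the assumptions on `κ`), while the numerator `N_{ijk}` has at most a simple pole,
since only the factor with index `m` is singular at `a`. So `Υ_{ijk}` has a removable singularity
at both points, and each of the two circle integrals vanishes for small radii by Cauchy's theorem.
-/

theorem eventually_circleIntegral_eq_zero_of_meromorphicOrderAt_nonneg
    {E : Type*} [NormedAddCommGroup E] [NormedSpace ℂ E] [CompleteSpace E]
    {f : ℂ → E} {c : ℂ} (hf : MeromorphicAt f c) (hord : 0 ≤ meromorphicOrderAt f c) :
    ∀ᶠ r in 𝓝[>] (0 : ℝ), ∮ z in C(c, r), f z = 0 := by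
  obtain ⟨g, hg, hfg⟩ := hf.meromorphicOrderAt_nonneg_iff.1 hord
  obtain ⟨ε₁, hε₁, hg_ball⟩ := hg.exists_ball_analyticOnNhd
  obtain ⟨ε₂, hε₂, hfg_ball⟩ :=
    Metric.eventually_nhds_iff_ball.1 (eventually_nhdsWithin_iff.1 hfg)
  filter_upwards [Ioo_mem_nhdsGT (lt_min hε₁ hε₂)] with r ⟨hr, hrε⟩
  have hsphere : Set.EqOn f g (Metric.sphere c r) := fun z hz ↦
    hfg_ball z (Metric.sphere_subset_ball (hrε.trans_le (min_le_right _ _)) hz)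
      (Metric.ne_of_mem_sphere hz hr.ne')
  rw [circleIntegral.integral_congr hr.le hsphere]
  exact ((hg_ball.mono (Metric.closedBall_subset_ball (hrε.trans_le (min_le_left _ _)))
    ).differentiableOn.diffContOnCl_ball subset_rfl).circleIntegral_eq_zero hr.le

theorem meromorphicOrderAt_div_sub_add {c a : ℂ} {R : ℂ → ℂ} (hc : c ≠ 0)
    (hR : AnalyticAt ℂ R a) : meromorphicOrderAt (fun z ↦ c / (z - a) + R z) a = -1 := by
  classical
  have hpole : meromorphicOrderAt (fun z ↦ c / (z - a)) a = -1 := by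
    rw [fun_meromorphicOrderAt_div (by fun_prop) (by fun_prop), meromorphicOrderAt_id_sub_const,
      meromorphicOrderAt_const, if_neg hc]
    rfl
  have hlt : meromorphicOrderAt (fun z ↦ c / (z - a)) a < meromorphicOrderAt R a :=
    hpole ▸ hR.meromorphicOrderAt_nonneg.trans_lt' (by decide)
  exact (meromorphicOrderAt_add_eq_left_of_lt hR.meromorphicAt hlt).trans hpole

theorem ne_inv_of_sq_ne_one {G₀ : Type*} [GroupWithZero G₀] {a : G₀} (ha0 : a ≠ 0)
    (ha1 : a ^ 2 ≠ 1) : a ≠ a⁻¹ := by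
  intro h
  apply ha1
  rw [sq]
  nth_rewrite 2 [h]
  exact mul_inv_cancel₀ ha0

/-- The part of `D` that is regular at `κ_m` and at `κ_m⁻¹`. -/
noncomputable def upsRest (l : ℕ) (κ : ℕ → ℂ) (m : ℕ) (μ : ℂ) : ℂ :=
  (∑ r ∈ (Finset.Icc 1 l).erase m, (1 / (μ - κ r) + 1 / (μ - (κ r)⁻¹)))
    - ((l : ℂ) - 2) / μ - 4 * μ / (μ ^ 2 - 1)

section Pole

variable {l : ℕ} {κ : ℕ → ℂ} {m : ℕ} {a : ℂ}

theorem upsD_eq_add_upsRest (hm : m ∈ Finset.Icc 1 l) (μ : ℂ) :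
    upsD l κ μ = 1 / (μ - κ m) + 1 / (μ - (κ m)⁻¹) + upsRest l κ m μ := by
  rw [upsD, upsRest, ← Finset.add_sum_erase _ _ hm]
  ring

@[fun_prop]
theorem meromorphicAt_upsFactor (n : ℕ) : MeromorphicAt (upsFactor l κ n) a := by
  unfold upsFactor
  split_ifs <;> fun_prop

@[fun_prop]
theorem meromorphicAt_upsD : MeromorphicAt (upsD l κ) a := by
  unfold upsD
  fun_prop

theorem analyticAt_upsRest (ha0 : a ≠ 0) (ha1 : a ^ 2 ≠ 1)
    (har : ∀ r ∈ (Finset.Icc 1 l).erase m, a ≠ κ r ∧ a ≠ (κ r)⁻¹) :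
    AnalyticAt ℂ (upsRest l κ m) a := by
  have hsum : AnalyticAt ℂ (fun μ ↦
      ∑ r ∈ (Finset.Icc 1 l).erase m, (1 / (μ - κ r) + 1 / (μ - (κ r)⁻¹))) a := by
    refine Finset.analyticAt_fun_sum _ fun r hr ↦ ?_
    have := har r hr
    fun_prop (disch := simp [sub_ne_zero, *])
  unfold upsRest
  fun_prop (disch := simp [sub_ne_zero, *])

theorem analyticAt_upsFactor {n : ℕ} (hn : 1 ≤ n) (hnm : n ≠ m)
    (har : ∀ r ∈ (Finset.Icc 1 l).erase m, a ≠ κ r ∧ a ≠ (κ r)⁻¹) :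
    AnalyticAt ℂ (upsFactor l κ n) a := by
  unfold upsFactor
  split_ifs with hnl
  · have := har n (by simp [hnm, hn, hnl])
    fun_prop (disch := simp [sub_ne_zero, *])
  · fun_prop

theorem meromorphicOrderAt_upsFactor_self (hm : m ≤ l) (ha0 : a ≠ 0) (ha1 : a ^ 2 ≠ 1)
    (hpole : a = κ m ∨ a = (κ m)⁻¹) : meromorphicOrderAt (upsFactor l κ m) a = -1 := by
  have hinv := ne_inv_of_sq_ne_one ha0 ha1
  have hκ0 : κ m ≠ 0 := by rcases hpole with rfl | rfl <;> simpa using ha0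
  rcases hpole with rfl | rfl
  · have : upsFactor l κ m =
        fun μ ↦ -κ m / (μ - κ m) + (κ m)⁻¹ / (μ - (κ m)⁻¹) := by
      ext μ; simp only [upsFactor, if_pos hm]
    rw [this]
    exact meromorphicOrderAt_div_sub_add (neg_ne_zero.2 hκ0)
      (by fun_prop (disch := simpa [sub_ne_zero] using hinv))
  · have : upsFactor l κ m =
        fun μ ↦ (κ m)⁻¹ / (μ - (κ m)⁻¹) + -κ m / (μ - κ m) := by
      ext μ; simp only [upsFactor, if_pos hm]; ring
    rw [this]
    exact meromorphicOrderAt_div_sub_add (inv_ne_zero hκ0)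
      (by fun_prop (disch := simpa [sub_ne_zero] using hinv))

theorem meromorphicOrderAt_upsD (hm : m ∈ Finset.Icc 1 l) (ha0 : a ≠ 0) (ha1 : a ^ 2 ≠ 1)
    (har : ∀ r ∈ (Finset.Icc 1 l).erase m, a ≠ κ r ∧ a ≠ (κ r)⁻¹)
    (hpole : a = κ m ∨ a = (κ m)⁻¹) : meromorphicOrderAt (upsD l κ) a = -1 := by
  have hD : upsD l κ = fun μ ↦ 1 / (μ - a) + (1 / (μ - a⁻¹) + upsRest l κ m μ) := by
    ext μ
    rcases hpole with rfl | rfl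
    · rw [upsD_eq_add_upsRest hm, add_assoc]
    · rw [upsD_eq_add_upsRest hm, inv_inv]; ring
  have hinv := ne_inv_of_sq_ne_one ha0 ha1
  rw [hD]
  have hR : AnalyticAt ℂ (fun μ ↦ 1 / (μ - a⁻¹)) a := by
    fun_prop (disch := simpa [sub_ne_zero] using hinv)
  exact meromorphicOrderAt_div_sub_add one_ne_zero (hR.add (analyticAt_upsRest ha0 ha1 har))

theorem ite_le_meromorphicOrderAt_upsFactor {n : ℕ} (hn : 1 ≤ n)
    (hm : m ≤ l) (ha0 : a ≠ 0) (ha1 : a ^ 2 ≠ 1)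
    (har : ∀ r ∈ (Finset.Icc 1 l).erase m, a ≠ κ r ∧ a ≠ (κ r)⁻¹)
    (hpole : a = κ m ∨ a = (κ m)⁻¹) :
    ((if n = m then -1 else 0 : ℤ) : WithTop ℤ) ≤
      meromorphicOrderAt (upsFactor l κ n) a := by
  split_ifs with hnm
  · subst hnm
    exact (meromorphicOrderAt_upsFactor_self hm ha0 ha1 hpole).ge
  · exact (analyticAt_upsFactor hn hnm har).meromorphicOrderAt_nonneg

theorem meromorphicOrderAt_Ups_nonneg {i j k : ℕ} (hm : m ∈ Finset.Icc 1 l)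
    (hi : 1 ≤ i) (hj : 1 ≤ j) (hk : 1 ≤ k)
    (hcount : (if i = m then 1 else 0) + (if j = m then 1 else 0) +
        (if k = m then 1 else 0) ≤ 1)
    (ha0 : a ≠ 0) (ha1 : a ^ 2 ≠ 1)
    (har : ∀ r ∈ (Finset.Icc 1 l).erase m, a ≠ κ r ∧ a ≠ (κ r)⁻¹)
    (hpole : a = κ m ∨ a = (κ m)⁻¹) : 0 ≤ meromorphicOrderAt (Ups l κ i j k) a := by
  have hml := (Finset.mem_Icc.1 hm).2
  have hcount' : (-1 : ℤ) ≤
      (if i = m then -1 else 0) + (if j = m then -1 else 0) + (if k = m then -1 else 0) := by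
    split_ifs at hcount ⊢ <;> omega
  have hnum : (-1 : WithTop ℤ) ≤ meromorphicOrderAt
      (fun μ ↦ -(upsFactor l κ i μ * upsFactor l κ j μ * upsFactor l κ k μ)) a := by
    rw [← meromorphicOrderAt_fun_neg, fun_meromorphicOrderAt_mul (by fun_prop) (by fun_prop),
      fun_meromorphicOrderAt_mul (by fun_prop) (by fun_prop)]
    refine (WithTop.coe_le_coe.2 hcount').trans ?_
    rw [WithTop.coe_add, WithTop.coe_add]
    gcongr
    exacts [ite_le_meromorphicOrderAt_upsFactor hi hml ha0 ha1 har hpole,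
      ite_le_meromorphicOrderAt_upsFactor hj hml ha0 ha1 har hpole,
      ite_le_meromorphicOrderAt_upsFactor hk hml ha0 ha1 har hpole]
  have hden : meromorphicOrderAt (fun μ ↦ 2 * μ ^ 2 * upsD l κ μ) a = -1 :=
    (meromorphicOrderAt_mul_of_ne_zero (g := fun μ ↦ 2 * μ ^ 2) (by fun_prop)
      (by simpa using ha0)).trans (meromorphicOrderAt_upsD hm ha0 ha1 har hpole)
  unfold Ups
  rw [fun_meromorphicOrderAt_div (by fun_prop) (by fun_prop), hden]
  simpa using (LinearOrderedAddCommGroupWithTop.sub_le_sub_iff_left_of_ne_top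
    (a := (-1 : WithTop ℤ)) (by decide)).2 hnum

theorem pole_avoids_other_singularities
    (hκ : ∀ r ∈ Finset.Icc 1 l, κ r ≠ 0 ∧ κ r ≠ 1 ∧ κ r ≠ -1)
    (hκ' : ∀ r ∈ Finset.Icc 1 l, ∀ s ∈ Finset.Icc 1 l, r ≠ s →
      κ r ≠ κ s ∧ κ r * κ s ≠ 1)
    (hm : m ∈ Finset.Icc 1 l) (hpole : a = κ m ∨ a = (κ m)⁻¹) :
    a ≠ 0 ∧ a ^ 2 ≠ 1 ∧
      ∀ r ∈ (Finset.Icc 1 l).erase m, a ≠ κ r ∧ a ≠ (κ r)⁻¹ := by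
  obtain ⟨h0, h1, hn1⟩ := hκ m hm
  have hother : ∀ r ∈ (Finset.Icc 1 l).erase m, κ m ≠ κ r ∧ κ m ≠ (κ r)⁻¹ := by
    intro r hr
    obtain ⟨hrm, hr⟩ := Finset.mem_erase.1 hr
    obtain ⟨hne, hmul⟩ := hκ' m hm r hr (Ne.symm hrm)
    exact ⟨hne, fun h ↦ hmul ((mul_eq_one_iff_eq_inv₀ (hκ r hr).1).2 h)⟩
  rcases hpole with rfl | rfl
  · exact ⟨h0, by simp [h1, hn1], hother⟩
  · refine ⟨inv_ne_zero h0, by simp [inv_pow, h1, hn1], fun r hr ↦ ⟨?_, ?_⟩⟩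
    · rw [Ne, inv_eq_iff_eq_inv]
      exact (hother r hr).2
    · exact inv_injective.ne (hother r hr).1

end Pole

theorem stmt8_general (l : ℕ) (κ : ℕ → ℂ)
    (hκ : ∀ r ∈ Finset.Icc 1 l, κ r ≠ 0 ∧ κ r ≠ 1 ∧ κ r ≠ -1)
    (hκ' : ∀ r ∈ Finset.Icc 1 l, ∀ s ∈ Finset.Icc 1 l, r ≠ s →
      κ r ≠ κ s ∧ κ r * κ s ≠ 1)
    (m : ℕ) (hm : m ∈ Finset.Icc 1 l)
    (i j k : ℕ) (hi : i ∈ Finset.Icc 1 (l + 1)) (hj : j ∈ Finset.Icc 1 (l + 1))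
    (hk : k ∈ Finset.Icc 1 (l + 1))
    (hcount : (if i = m then 1 else 0) + (if j = m then 1 else 0) +
        (if k = m then 1 else 0) ≤ 1) :
    ∃ ε > (0 : ℝ), ∀ r : ℝ, 0 < r → r < ε →
      (2 * Real.pi * Complex.I)⁻¹ *
        ((∮ μ in C(κ m, r), Ups l κ i j k μ) +
          (∮ μ in C((κ m)⁻¹, r), Ups l κ i j k μ)) = 0 := by
  have hresidue : ∀ a, a = κ m ∨ a = (κ m)⁻¹ →
      ∀ᶠ r in 𝓝[>] (0 : ℝ), ∮ μ in C(a, r), Ups l κ i j k μ = 0 := by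
    intro a hpole
    obtain ⟨ha0, ha1, har⟩ := pole_avoids_other_singularities hκ hκ' hm hpole
    exact eventually_circleIntegral_eq_zero_of_meromorphicOrderAt_nonneg
      (by unfold Ups; fun_prop)
      (meromorphicOrderAt_Ups_nonneg hm (Finset.mem_Icc.1 hi).1 (Finset.mem_Icc.1 hj).1
        (Finset.mem_Icc.1 hk).1 hcount ha0 ha1 har hpole)
  obtain ⟨ε, hε, hsmall⟩ := (nhdsGT_basis (0 : ℝ)).eventually_iff.1
    ((hresidue _ (.inl rfl)).and (hresidue _ (.inr rfl)))
  refine ⟨ε, hε, fun r hr hrε ↦ ?_⟩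
  obtain ⟨h₁, h₂⟩ := hsmall ⟨hr, hrε⟩
  rw [h₁, h₂, add_zero, mul_zero]

/-- Let `m ∈ {1, …, l}` and let `i, j, k ∈ {1, …, l+1}` be
such that at most one of `i, j, k` equals `m`.  Then the sum of the residues
of `Υ_{ijk}` at `μ = κ_m` and at `μ = κ_m⁻¹` is `0`, the residues being
expressed as circle integrals of sufficiently small radius.  (In particular,
for pairwise distinct `i, j, k ∈ {1, …, l}` all such residue pair-sums
vanish.) -/
theorem stmt8 (l : ℕ) (hl : 3 ≤ l) (κ : ℕ → ℂ)
    (hκ : ∀ r ∈ Finset.Icc 1 l, κ r ≠ 0 ∧ κ r ≠ 1 ∧ κ r ≠ -1)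
    (hκ' : ∀ r ∈ Finset.Icc 1 l, ∀ s ∈ Finset.Icc 1 l, r ≠ s →
      κ r ≠ κ s ∧ κ r * κ s ≠ 1)
    (m : ℕ) (hm : m ∈ Finset.Icc 1 l)
    (i j k : ℕ) (hi : i ∈ Finset.Icc 1 (l + 1)) (hj : j ∈ Finset.Icc 1 (l + 1))
    (hk : k ∈ Finset.Icc 1 (l + 1))
    (hcount : (if i = m then 1 else 0) + (if j = m then 1 else 0) +
        (if k = m then 1 else 0) ≤ 1) :
    ∃ ε > (0 : ℝ), ∀ r : ℝ, 0 < r → r < ε →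
      (2 * Real.pi * Complex.I)⁻¹ *
        ((∮ μ in C(κ m, r), Ups l κ i j k μ) +
          (∮ μ in C((κ m)⁻¹, r), Ups l κ i j k μ)) = 0 :=
  stmt8_general l κ hκ hκ' m hm i j k hi hj hk hcount
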